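/- arXiv:2507.15053 — 5 statements merged into one kernel-verified Lean document; each statement's English description precedes it below -/
import Mathlib

section
/- If a set C ⊆ E is an intersection of a (possibly empty) collection of closed balls whose radii are (not necessarily equal and) less than or equal to R > 0, then C is strongly convex with respect to R. -/
/-- A set `C` in a real normed space is *strongly convex with respect to `R`* if it is an
intersection of a (possibly empty) collection of closed balls with radius `R`. -/
def StronglyConvexWrt {E : Type*} [NormedAddCommGroup E] (R : ℝ) (C : Set E) : Prop :=
  ∃ S : Set E, C = ⋂ c ∈ S, Metric.closedBall c R

lemma closedBall_eq_iInter_aux {E : Type*} [NormedAddCommGroup E] [NormedSpace ℝ E]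
    {R r : ℝ} (hr : 0 < r) (hrR : r ≤ R) (c : E) :
    Metric.closedBall c r = ⋂ d ∈ {d : E | ‖d - c‖ ≤ R - r}, Metric.closedBall d R := by
  ext x
  simp only [Set.mem_iInter, Metric.mem_closedBall, dist_eq_norm, Set.mem_setOf_eq]
  constructor
  · intro hx d hd
    calc ‖x - d‖ = ‖(x - c) + (c - d)‖ := by rw [sub_add_sub_cancel]
      _ ≤ ‖x - c‖ + ‖c - d‖ := norm_add_le _ _
      _ = ‖x - c‖ + ‖d - c‖ := by rw [norm_sub_rev c d]
      _ ≤ r + (R - r) := add_le_add hx hd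
      _ = R := by ring
  · intro h
    by_cases hxc : x = c
    · simp [hxc, hr.le]
    · have hn : 0 < ‖x - c‖ := by
        simpa [sub_eq_zero] using norm_pos_iff.mpr (sub_ne_zero.mpr hxc)
      set d : E := c - ((R - r) / ‖x - c‖) • (x - c) with hd
      have hRr : 0 ≤ R - r := by linarith
      have hdc : ‖d - c‖ ≤ R - r := by
        have : d - c = -(((R - r) / ‖x - c‖) • (x - c)) := by rw [hd]; abel
        rw [this, norm_neg, norm_smul, Real.norm_eq_abs,
          abs_of_nonneg (div_nonneg hRr hn.le), div_mul_cancel₀ _ hn.ne']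
      have hxd : x - d = (1 + (R - r) / ‖x - c‖) • (x - c) := by
        rw [hd, add_smul, one_smul, sub_sub_eq_add_sub, sub_eq_iff_eq_add]; abel
      have h2 := h d hdc
      rw [hxd, norm_smul, Real.norm_eq_abs,
        abs_of_nonneg (by positivity : (0:ℝ) ≤ 1 + (R - r) / ‖x - c‖)] at h2
      have : ‖x - c‖ + (R - r) ≤ R := by
        have := h2
        field_simp at this
        nlinarith [hn]
      linarith

/-- If a set `C ⊆ E` is an intersection of a (possibly empty) collection of closed balls
whose radii are (not necessarily equal and) less than or equal to `R > 0`, then `C` is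
strongly convex with respect to `R`. Balls are encoded as (center, radius) pairs. -/
theorem stronglyConvexWrt_of_iInter_closedBalls {E : Type*} [NormedAddCommGroup E]
    [NormedSpace ℝ E] (R : ℝ) (hR : 0 < R) (C : Set E) (S : Set (E × ℝ))
    (hS : ∀ p ∈ S, 0 < p.2 ∧ p.2 ≤ R)
    (hC : C = ⋂ p ∈ S, Metric.closedBall p.1 p.2) :
    StronglyConvexWrt R C := by
  refine ⟨⋃ p ∈ S, {d : E | ‖d - p.1‖ ≤ R - p.2}, ?_⟩
  rw [hC]
  ext x
  simp only [Set.mem_iInter, Set.mem_iUnion, Set.mem_setOf_eq]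
  constructor
  · intro hx d hd
    obtain ⟨p, hp, hdp⟩ := hd
    have := hx p hp
    rw [closedBall_eq_iInter_aux (hS p hp).1 (hS p hp).2 p.1] at this
    simp only [Set.mem_iInter, Set.mem_setOf_eq] at this
    exact this d hdp
  · intro h p hp
    rw [closedBall_eq_iInter_aux (hS p hp).1 (hS p hp).2 p.1]
    simp only [Set.mem_iInter, Set.mem_setOf_eq]
    exact fun d hd => h d ⟨p, hp, hd⟩
end

section
/- A nonempty closed bounded convex set C in a real Hilbert space H is strongly convex with respect to R > 0 if and only if the function x* ↦ R‖x*‖ − σ_C(x*) is convex and continuous on H. -/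
open scoped RealInnerProductSpace

/-- The support function of a set `C` in a real Hilbert space. -/
noncomputable def supportFn {H : Type*} [NormedAddCommGroup H] [InnerProductSpace ℝ H]
    (C : Set H) (xs : H) : ℝ :=
  sSup ((fun x => ⟪x, xs⟫) '' C)


section StronglyConvexHelpers

variable {H : Type*} [NormedAddCommGroup H] [InnerProductSpace ℝ H]


theorem combo_sq (a b : H) {t : ℝ} (ht : 0 ≤ t) (ht1 : t ≤ 1) :
    ‖t • a + (1 - t) • b‖ ^ 2 = t * ‖a‖ ^ 2 + (1 - t) * ‖b‖ ^ 2 - t * (1 - t) * ‖a - b‖ ^ 2 := by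
  have h1 := norm_add_sq_real (t • a) ((1 - t) • b)
  have h2 := norm_sub_sq_real a b
  rw [norm_smul, norm_smul, real_inner_smul_left, real_inner_smul_right] at h1
  rw [h1, h2, Real.norm_eq_abs, Real.norm_eq_abs, abs_of_nonneg ht, abs_of_nonneg (by linarith)]
  ring

theorem ball_combo {c x y : H} {R : ℝ} (hR : 0 < R) (hx : ‖x - c‖ ≤ R) (hy : ‖y - c‖ ≤ R)
    {t : ℝ} (ht : 0 ≤ t) (ht1 : t ≤ 1) {z : H} (hz : ‖z‖ ≤ 1) :
    ‖t • x + (1 - t) • y + (t * (1 - t) * ‖x - y‖ ^ 2 / (2 * R)) • z - c‖ ≤ R := by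
  set s := t * (1 - t) * ‖x - y‖ ^ 2 with hs
  have hs0 : 0 ≤ s := by
    have : (0:ℝ) ≤ ‖x - y‖ ^ 2 := sq_nonneg _
    have h1t : (0:ℝ) ≤ 1 - t := by linarith
    positivity
  have key : ‖t • x + (1 - t) • y - c‖ ^ 2 ≤ R ^ 2 - s := by
    have hd : t • x + (1 - t) • y - c = t • (x - c) + (1 - t) • (y - c) := by module
    rw [hd, combo_sq _ _ ht ht1, hs]
    have e1 : (x - c) - (y - c) = x - y := by abel
    rw [e1]
    have b1 : ‖x - c‖ ^ 2 ≤ R ^ 2 := by nlinarith [norm_nonneg (x - c)]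
    have b2 : ‖y - c‖ ^ 2 ≤ R ^ 2 := by nlinarith [norm_nonneg (y - c)]
    nlinarith [sq_nonneg (‖x-y‖)]
  have hRs : 0 ≤ R ^ 2 - s := le_trans (sq_nonneg _) key
  have hsR : s ≤ R ^ 2 := by linarith
  have step1 : ‖t • x + (1 - t) • y - c‖ ≤ R - s / (2 * R) := by
    have hnn : (0:ℝ) ≤ R - s / (2 * R) := by
      rw [sub_nonneg, div_le_iff₀ (by positivity)]
      nlinarith
    have hb2 : R ^ 2 - s ≤ (R - s / (2 * R)) ^ 2 := by
      have hR' : R ≠ 0 := hR.ne'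
      field_simp
      nlinarith [sq_nonneg s]
    calc ‖t • x + (1 - t) • y - c‖ = Real.sqrt (‖t • x + (1 - t) • y - c‖ ^ 2) :=
          (Real.sqrt_sq (norm_nonneg _)).symm
      _ ≤ Real.sqrt ((R - s / (2 * R)) ^ 2) := Real.sqrt_le_sqrt (le_trans key hb2)
      _ = R - s / (2 * R) := Real.sqrt_sq hnn
  calc ‖t • x + (1 - t) • y + (s / (2 * R)) • z - c‖
      ≤ ‖t • x + (1 - t) • y - c‖ + ‖(s / (2 * R)) • z‖ := by
        have : t • x + (1 - t) • y + (s / (2 * R)) • z - c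
            = (t • x + (1 - t) • y - c) + (s / (2 * R)) • z := by abel
        rw [this]; exact norm_add_le _ _
    _ ≤ (R - s / (2 * R)) + s / (2 * R) := by
        apply add_le_add step1
        rw [norm_smul, Real.norm_eq_abs, abs_of_nonneg (by positivity)]
        nlinarith [div_nonneg hs0 (by positivity : (0:ℝ) ≤ 2 * R)]
    _ = R := by ring


theorem sfn_bdd {C : Set H} {M : ℝ} (hM : ∀ x ∈ C, ‖x‖ ≤ M) (u : H) :
    BddAbove ((fun x => ⟪x, u⟫) '' C) := by
  refine ⟨M * ‖u‖, ?_⟩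
  rintro _ ⟨x, hx, rfl⟩
  calc ⟪x, u⟫ ≤ ‖x‖ * ‖u‖ := real_inner_le_norm x u
    _ ≤ M * ‖u‖ := by nlinarith [hM x hx, norm_nonneg x, norm_nonneg u]

theorem le_sfn {C : Set H} {M : ℝ} (hM : ∀ x ∈ C, ‖x‖ ≤ M) {x : H} (hx : x ∈ C) (u : H) :
    ⟪x, u⟫ ≤ supportFn C u :=
  le_csSup (sfn_bdd hM u) ⟨x, hx, rfl⟩

theorem sfn_le {C : Set H} (hne : C.Nonempty) {u : H} {a : ℝ}
    (h : ∀ x ∈ C, ⟪x, u⟫ ≤ a) : supportFn C u ≤ a := by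
  apply csSup_le (hne.image _)
  rintro _ ⟨x, hx, rfl⟩; exact h x hx

theorem sfn_zero {C : Set H} (hne : C.Nonempty) : supportFn C 0 = 0 := by
  have h : (fun x => ⟪x, (0:H)⟫) '' C = {0} := by
    apply Set.eq_singleton_iff_nonempty_unique_mem.2
    exact ⟨hne.image _, by rintro _ ⟨x, hx, rfl⟩; simp⟩
  rw [supportFn, h, csSup_singleton]

theorem sfn_smul {C : Set H} (hne : C.Nonempty) {M : ℝ} (hM : ∀ x ∈ C, ‖x‖ ≤ M)
    {t : ℝ} (ht : 0 ≤ t) (u : H) : supportFn C (t • u) = t * supportFn C u := by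
  rcases eq_or_lt_of_le ht with h0 | h0
  · rw [← h0]; simp only [zero_smul, zero_mul]; exact sfn_zero hne
  apply le_antisymm
  · apply csSup_le (hne.image _)
    rintro _ ⟨x, hx, rfl⟩
    show ⟪x, t • u⟫ ≤ _
    rw [real_inner_smul_right]
    exact mul_le_mul_of_nonneg_left (le_sfn hM hx u) ht
  · rw [← le_div_iff₀' h0]
    apply csSup_le (hne.image _)
    rintro _ ⟨x, hx, rfl⟩
    show ⟪x, u⟫ ≤ _
    rw [le_div_iff₀' h0, ← real_inner_smul_right]
    exact le_sfn hM hx _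

lemma arith_div_e {e a b : ℝ} (he : 0 < e) (h : e * a ≤ e * b) : a ≤ b :=
  le_of_mul_le_mul_left h he

/-- Approximate supporting ball for a set with the strong midpoint property. -/
theorem supp_ball {C : Set H} (hne : C.Nonempty) {M : ℝ} (hM : ∀ x ∈ C, ‖x‖ ≤ M)
    {R : ℝ} (hR : 0 < R)
    (hmid : ∀ x ∈ C, ∀ y ∈ C, ∀ t : ℝ, 0 ≤ t → t ≤ 1 → ∀ z : H, ‖z‖ ≤ 1 →
      t • x + (1 - t) • y + (t * (1 - t) * ‖x - y‖ ^ 2 / (2 * R)) • z ∈ C)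
    {w : H} (hw : w ≠ 0) {η : ℝ} (hη : 0 < η) :
    ∃ zc : H, (∀ y ∈ C, ‖y - zc‖ ^ 2 ≤ R ^ 2 + η) ∧
      ⟪zc, w⟫ ≤ supportFn C w - R * ‖w‖ ∧
      supportFn C w - R * ‖w‖ - η ≤ ⟪zc, w⟫ := by
  have hM0 : 0 ≤ M := le_trans (norm_nonneg _) (hM _ hne.choose_spec)
  have hwn : 0 < ‖w‖ := norm_pos_iff.2 hw
  obtain ⟨n, hn⟩ : ∃ n : H, n = ‖w‖⁻¹ • w := ⟨_, rfl⟩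
  have hn1 : ‖n‖ = 1 := by
    rw [hn, norm_smul, Real.norm_eq_abs, abs_of_nonneg (by positivity), inv_mul_cancel₀ hwn.ne']
  have hnn : ⟪n, n⟫ = 1 := by
    rw [real_inner_self_eq_norm_sq, hn1]; norm_num
  have hwsn : w = ‖w‖ • n := by rw [hn, smul_smul, mul_inv_cancel₀ hwn.ne', one_smul]
  have hnw : ⟪n, w⟫ = ‖w‖ := by
    rw [hn, real_inner_smul_left, real_inner_self_eq_norm_sq]
    field_simp
  obtain ⟨e, he⟩ : ∃ e : ℝ, e = min 1 (min (η / (4 * M ^ 2 + 2 * R)) (η / ‖w‖)) := ⟨_, rfl⟩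
  have he0 : 0 < e := by
    rw [he]; exact lt_min one_pos (lt_min (by positivity) (by positivity))
  have he1 : e ≤ 1 := by rw [he]; exact min_le_left _ _
  have heb : e * (4 * M ^ 2 + 2 * R) ≤ η := by
    have h1 : e ≤ η / (4 * M ^ 2 + 2 * R) := by
      rw [he]; exact le_trans (min_le_right _ _) (min_le_left _ _)
    rw [le_div_iff₀ (by positivity)] at h1; linarith
  have hew : e * ‖w‖ ≤ η := by
    have h1 : e ≤ η / ‖w‖ := by rw [he]; exact le_trans (min_le_right _ _) (min_le_right _ _)
    rw [le_div_iff₀ hwn] at h1; linarith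
  have hlt : supportFn C n - e * e < supportFn C n := by nlinarith
  obtain ⟨_, ⟨x, hx, rfl⟩, hgt⟩ := exists_lt_of_lt_csSup (hne.image _) hlt
  simp only at hgt
  refine ⟨x - R • n, ?_, ?_, ?_⟩
  · -- ball property
    intro y hy
    have hd2M : ‖x - y‖ ≤ 2 * M := by
      calc ‖x - y‖ ≤ ‖x‖ + ‖y‖ := norm_sub_le _ _
        _ ≤ 2 * M := by linarith [hM x hx, hM y hy]
    have hp := hmid x hx y hy (1 - e) (by linarith) (by linarith) n (le_of_eq hn1)
    have hip : ⟪(1 - e) • x + (1 - (1 - e)) • y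
        + ((1 - e) * (1 - (1 - e)) * ‖x - y‖ ^ 2 / (2 * R)) • n, n⟫
        ≤ supportFn C n := le_sfn hM hp n
    rw [inner_add_left, inner_add_left, real_inner_smul_left, real_inner_smul_left,
      real_inner_smul_left, hnn] at hip
    have h2 : supportFn C n ≤ ⟪x, n⟫ + e * e := by linarith
    have hyx : ⟪y, n⟫ - ⟪x, n⟫ ≤ e - (1 - e) * ‖x - y‖ ^ 2 / (2 * R) := by
      apply arith_div_e he0
      have expand : e * (e - (1 - e) * ‖x - y‖ ^ 2 / (2 * R)) =
          e * e - (1 - e) * (1 - (1 - e)) * ‖x - y‖ ^ 2 / (2 * R) * 1 := by ring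
      rw [expand]
      nlinarith [hip, h2]
    have hexp : y - (x - R • n) = (y - x) + R • n := by abel
    have hsq := norm_add_sq_real (y - x) (R • n)
    rw [real_inner_smul_right, norm_smul, Real.norm_eq_abs, abs_of_pos hR, hn1,
      norm_sub_rev y x, inner_sub_left] at hsq
    rw [hexp, hsq]
    have h4 : 2 * R * (⟪y, n⟫ - ⟪x, n⟫) ≤ 2 * R * e - (1 - e) * ‖x - y‖ ^ 2 := by
      have h5 := mul_le_mul_of_nonneg_left hyx (by positivity : (0:ℝ) ≤ 2 * R)
      have h6 : 2 * R * (e - (1 - e) * ‖x - y‖ ^ 2 / (2 * R))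
          = 2 * R * e - (1 - e) * ‖x - y‖ ^ 2 := by field_simp
      linarith
    have h7 : ‖x - y‖ ^ 2 ≤ 4 * M ^ 2 := by nlinarith [norm_nonneg (x - y)]
    have h8 : e * ‖x - y‖ ^ 2 ≤ e * (4 * M ^ 2) := mul_le_mul_of_nonneg_left h7 he0.le
    nlinarith [h4, h8, heb]
  · -- upper bound on ⟪zc, w⟫
    rw [inner_sub_left, real_inner_smul_left, hnw]
    have h1 : ⟪x, w⟫ ≤ supportFn C w := le_sfn hM hx w
    linarith
  · -- lower bound
    rw [inner_sub_left, real_inner_smul_left, hnw]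
    have hsw : supportFn C w = ‖w‖ * supportFn C n := by
      conv_lhs => rw [hwsn]
      exact sfn_smul hne hM (norm_nonneg _) n
    have hxw : ⟪x, w⟫ = ‖w‖ * ⟪x, n⟫ := by
      conv_lhs => rw [hwsn]
      rw [real_inner_smul_right]
    have h1 : ‖w‖ * (supportFn C n - e * e) ≤ ‖w‖ * ⟪x, n⟫ :=
      mul_le_mul_of_nonneg_left hgt.le hwn.le
    have hee : e * e * ‖w‖ ≤ η := by nlinarith
    rw [hsw, hxw]
    have h2 : ‖w‖ * (supportFn C n - e * e) = ‖w‖ * supportFn C n - e * e * ‖w‖ := by ring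
    linarith

/-- From an approximate enclosing ball, bound the support function. -/
theorem sfn_ball_bound {C : Set H} (hne : C.Nonempty) {R η : ℝ} (hR : 0 < R) (hη : 0 < η)
    {zc : H} (hball : ∀ y ∈ C, ‖y - zc‖ ^ 2 ≤ R ^ 2 + η) (u : H) :
    supportFn C u ≤ ⟪zc, u⟫ + (R + η / (2 * R)) * ‖u‖ := by
  apply sfn_le hne
  intro y hy
  have hyz : ‖y - zc‖ ≤ R + η / (2 * R) := by
    have h1 : (R + η / (2 * R)) ^ 2 = R ^ 2 + η + (η / (2 * R)) ^ 2 := by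
      field_simp; ring
    have h2 : ‖y - zc‖ ^ 2 ≤ (R + η / (2 * R)) ^ 2 := by
      rw [h1]; nlinarith [hball y hy, sq_nonneg (η / (2 * R))]
    have h3 : (0:ℝ) ≤ R + η / (2 * R) := by positivity
    nlinarith [norm_nonneg (y - zc), h2, h3]
  have h4 : ⟪y, u⟫ = ⟪zc, u⟫ + ⟪y - zc, u⟫ := by rw [inner_sub_left]; ring
  have h5 : ⟪y - zc, u⟫ ≤ ‖y - zc‖ * ‖u‖ := real_inner_le_norm _ _
  have h6 : ‖y - zc‖ * ‖u‖ ≤ (R + η / (2 * R)) * ‖u‖ :=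
    mul_le_mul_of_nonneg_right hyz (norm_nonneg _)
  linarith

theorem key_ineq {C : Set H} (hne : C.Nonempty) {M : ℝ} (hM : ∀ x ∈ C, ‖x‖ ≤ M)
    {R : ℝ} (hR : 0 < R)
    (hmid : ∀ x ∈ C, ∀ y ∈ C, ∀ t : ℝ, 0 ≤ t → t ≤ 1 → ∀ z : H, ‖z‖ ≤ 1 →
      t • x + (1 - t) • y + (t * (1 - t) * ‖x - y‖ ^ 2 / (2 * R)) • z ∈ C)
    (u v : H) :
    supportFn C u + supportFn C v ≤ supportFn C (u + v) + R * (‖u‖ + ‖v‖ - ‖u + v‖) := by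
  apply le_of_forall_pos_le_add
  intro ε hε
  obtain ⟨η, hηd⟩ : ∃ η : ℝ, η = ε * (2 * R) / (2 * R + ‖u‖ + ‖v‖ + 1) := ⟨_, rfl⟩
  have hD : (0:ℝ) < 2 * R + ‖u‖ + ‖v‖ + 1 := by positivity
  have hη : 0 < η := by rw [hηd]; positivity
  have hcond : η + η / (2 * R) * (‖u‖ + ‖v‖) ≤ ε := by
    have e1 : η + η / (2 * R) * (‖u‖ + ‖v‖) = η * (2 * R + ‖u‖ + ‖v‖) / (2 * R) := by
      field_simp; ring
    rw [e1, div_le_iff₀ (by positivity : (0:ℝ) < 2 * R)]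
    rw [hηd, div_mul_eq_mul_div, div_le_iff₀ hD]
    nlinarith [norm_nonneg u, norm_nonneg v, hε.le, hR.le]
  by_cases huv : u + v = 0
  · by_cases hu : u = 0
    · have hv : v = 0 := by rw [hu, zero_add] at huv; exact huv
      rw [hu, hv]
      simp [sfn_zero hne]
      linarith [norm_nonneg (0:H), hε.le]
    · obtain ⟨zc, hball, hup, hlow⟩ := supp_ball hne hM hR hmid hu hη
      have hv : v = -u := eq_neg_of_add_eq_zero_right huv
      have b2 := sfn_ball_bound hne hR hη hball v
      have hveq : ⟪zc, v⟫ = -⟪zc, u⟫ := by rw [hv, inner_neg_right]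
      have hnv : ‖v‖ = ‖u‖ := by rw [hv, norm_neg]
      rw [huv, sfn_zero hne, norm_zero]
      have expand2 : (R + η / (2 * R)) * ‖v‖ = R * ‖v‖ + η / (2 * R) * ‖v‖ := by ring
      have hpos : 0 ≤ η / (2 * R) * ‖v‖ := by positivity
      have hpos2 : 0 ≤ η / (2 * R) * ‖u‖ := by positivity
      linarith [b2, hlow, hcond]
  · obtain ⟨zc, hball, hup, _⟩ := supp_ball hne hM hR hmid huv hη
    have b1 := sfn_ball_bound hne hR hη hball u
    have b2 := sfn_ball_bound hne hR hη hball v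
    have hz : ⟪zc, u⟫ + ⟪zc, v⟫ = ⟪zc, u + v⟫ := (inner_add_right zc u v).symm
    have expand : (R + η / (2 * R)) * ‖u‖ + (R + η / (2 * R)) * ‖v‖
        = R * (‖u‖ + ‖v‖) + η / (2 * R) * (‖u‖ + ‖v‖) := by ring
    linarith [b1, b2, hup, hcond, hη]

theorem backward_dir {C : Set H} [CompleteSpace H] (hne : C.Nonempty)
    (hcl : IsClosed C) (hbd : Bornology.IsBounded C) (hconv : Convex ℝ C)
    {R : ℝ} (hR : 0 < R)
    (hcy : ConvexOn ℝ Set.univ (fun xs => R * ‖xs‖ - supportFn C xs)) :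
    ∃ S : Set H, C = ⋂ c ∈ S, Metric.closedBall c R := by
  obtain ⟨M, hM⟩ := isBounded_iff_forall_norm_le.1 hbd
  obtain ⟨f, hf⟩ : ∃ f : H → ℝ, f = fun xs => R * ‖xs‖ - supportFn C xs := ⟨_, rfl⟩
  rw [← hf] at hcy
  have hf0 : f 0 = 0 := by simp [hf, sfn_zero hne]
  have hfhom : ∀ c : ℝ, 0 < c → ∀ x : H, f (c • x) = c * f x := by
    intro c hc x
    simp only [hf]
    rw [norm_smul, Real.norm_eq_abs, abs_of_pos hc, sfn_smul hne hM hc.le]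
    ring
  have hfsub : ∀ x y : H, f (x + y) ≤ f x + f y := by
    intro x y
    have h := hcy.2 (Set.mem_univ x) (Set.mem_univ y)
      (by norm_num : (0:ℝ) ≤ 1/2) (by norm_num : (0:ℝ) ≤ 1/2) (by norm_num)
    have h2 : (1/2 : ℝ) • x + (1/2 : ℝ) • y = (1/2 : ℝ) • (x + y) := by module
    rw [h2, hfhom (1/2) (by norm_num) (x + y)] at h
    simp only [smul_eq_mul] at h
    linarith
  refine ⟨{c : H | C ⊆ Metric.closedBall c R}, ?_⟩
  apply Set.Subset.antisymm
  · intro x hx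
    exact Set.mem_iInter₂.2 fun c hc => hc hx
  · intro p hp
    by_contra hpC
    -- projection of p onto C
    obtain ⟨q, hqC, hq⟩ := exists_norm_eq_iInf_of_complete_convex hne hcl.isComplete hconv p
    have hproj := (norm_eq_iInf_iff_real_inner_le_zero hconv hqC).1 hq
    obtain ⟨u, hud⟩ : ∃ u : H, u = p - q := ⟨_, rfl⟩
    rw [← hud] at hproj
    have hu : u ≠ 0 := by rw [hud]; exact sub_ne_zero.2 fun h => hpC (h ▸ hqC)
    have hσq : supportFn C u ≤ ⟪q, u⟫ := by
      apply sfn_le hne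
      intro x hx
      have h1 : ⟪u, x - q⟫ = ⟪x, u⟫ - ⟪q, u⟫ := by
        rw [inner_sub_right, real_inner_comm u x, real_inner_comm u q]
      have h2 := hproj x hx
      linarith [h1, h2]
    -- Hahn–Banach extension
    have hfle : ∀ xx : (LinearPMap.mkSpanSingleton u (f u) hu : H →ₗ.[ℝ] ℝ).domain,
        (LinearPMap.mkSpanSingleton u (f u) hu : H →ₗ.[ℝ] ℝ) xx ≤ f xx.1 := by
      rintro ⟨xx, hxx⟩
      obtain ⟨c, rfl⟩ := Submodule.mem_span_singleton.1 hxx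
      rw [LinearPMap.mkSpanSingleton'_apply]
      rcases le_or_gt 0 c with hc | hc
      · rcases eq_or_lt_of_le hc with h0 | h0
        · simp [← h0, hf0]
        · rw [hfhom c h0]; simp [smul_eq_mul]
      · have hneg : f (c • u) = (-c) * f (-u) := by
          have : c • u = (-c) • (-u) := by module
          rw [this, hfhom (-c) (by linarith) (-u)]
        have hsum : 0 ≤ f u + f (-u) := by
          have := hfsub u (-u)
          simp only [add_neg_cancel, hf0] at this
          linarith
        rw [hneg]
        simp only [smul_eq_mul, RingHom.id_apply]
        nlinarith
    obtain ⟨g, hg1, hg2⟩ := exists_extension_of_le_sublinear _ f hfhom hfsub hfle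
    have hgu : g u = f u := by
      have := hg1 ⟨u, Submodule.mem_span_singleton_self u⟩
      rwa [LinearPMap.mkSpanSingleton_apply] at this
    -- g is bounded
    obtain ⟨x0, hx0⟩ := hne
    have hgb : ∀ w : H, ‖g w‖ ≤ (R + ‖x0‖) * ‖w‖ := by
      intro w
      have key : ∀ w : H, g w ≤ (R + ‖x0‖) * ‖w‖ := by
        intro w
        have h1 : -(‖x0‖ * ‖w‖) ≤ ⟪x0, w⟫ := neg_le_of_abs_le (abs_real_inner_le_norm x0 w)
        have h2 : ⟪x0, w⟫ ≤ supportFn C w := le_sfn hM hx0 w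
        have h3 := hg2 w
        simp only [hf] at h3
        nlinarith
      rw [Real.norm_eq_abs, abs_le]
      constructor
      · have := key (-w)
        rw [map_neg, norm_neg] at this
        linarith
      · exact key w
    obtain ⟨G, hG⟩ : ∃ G : H →L[ℝ] ℝ, G = LinearMap.mkContinuous g (R + ‖x0‖) hgb := ⟨_, rfl⟩
    obtain ⟨z, hz⟩ : ∃ z : H, z = (InnerProductSpace.toDual ℝ H).symm G := ⟨_, rfl⟩
    have hzw : ∀ w : H, ⟪z, w⟫ = g w := by
      intro w
      rw [hz, InnerProductSpace.toDual_symm_apply, hG]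
      rfl
    -- C is contained in ball around -z
    have hCball : C ⊆ Metric.closedBall (-z) R := by
      intro x hx
      rw [Metric.mem_closedBall, dist_eq_norm, sub_neg_eq_add]
      have hall : ∀ w : H, ⟪x + z, w⟫ ≤ R * ‖w‖ := by
        intro w
        rw [inner_add_left, hzw w]
        have h1 : ⟪x, w⟫ ≤ supportFn C w := le_sfn hM hx w
        have h2 := hg2 w
        simp only [hf] at h2
        linarith
      have := hall (x + z)
      rw [real_inner_self_eq_norm_sq] at this
      nlinarith [norm_nonneg (x + z), hR]
    -- p is in the ball around -z since p ∈ ⋂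
    have hpball : p ∈ Metric.closedBall (-z) R := by
      have := Set.mem_iInter₂.1 hp (-z) hCball
      exact this
    rw [Metric.mem_closedBall, dist_eq_norm, sub_neg_eq_add] at hpball
    have hun : 0 < ‖u‖ := norm_pos_iff.2 hu
    have hpu : ⟪p, u⟫ = ⟪q, u⟫ + ‖u‖ ^ 2 := by
      have : ⟪p, u⟫ - ⟪q, u⟫ = ⟪u, u⟫ := by
        rw [← inner_sub_left, ← hud]
      rw [real_inner_self_eq_norm_sq] at this
      linarith
    have hinner : (‖u‖ + R) * ‖u‖ ≤ ⟪p + z, u⟫ := by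
      rw [inner_add_left, hzw u, hgu]
      simp only [hf]
      nlinarith [hσq, hpu]
    have hcs : ⟪p + z, u⟫ ≤ ‖p + z‖ * ‖u‖ := real_inner_le_norm _ _
    nlinarith [hpball, hun, hcs, hinner]

theorem sfn_lip {C : Set H} (hne : C.Nonempty) {M : ℝ} (hM0 : 0 ≤ M) (hM : ∀ x ∈ C, ‖x‖ ≤ M)
    (u v : H) : supportFn C u - supportFn C v ≤ M * ‖u - v‖ := by
  have h1 : supportFn C u ≤ supportFn C v + M * ‖u - v‖ := by
    apply sfn_le hne
    intro x hx
    have h0 : ⟪x, u⟫ = ⟪x, v⟫ + ⟪x, u - v⟫ := by rw [inner_sub_right]; ring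
    have h2 : ⟪x, u - v⟫ ≤ M * ‖u - v‖ := by
      calc ⟪x, u - v⟫ ≤ ‖x‖ * ‖u - v‖ := real_inner_le_norm _ _
        _ ≤ M * ‖u - v‖ := mul_le_mul_of_nonneg_right (hM x hx) (norm_nonneg _)
    have h3 : ⟪x, v⟫ ≤ supportFn C v := le_sfn hM hx v
    linarith
  linarith

theorem sfn_cont {C : Set H} (hne : C.Nonempty) {M : ℝ} (hM0 : 0 ≤ M) (hM : ∀ x ∈ C, ‖x‖ ≤ M) :
    Continuous (supportFn C) := by
  have h : LipschitzWith (Real.toNNReal M) (supportFn C) := by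
    apply LipschitzWith.of_dist_le_mul
    intro u v
    rw [Real.dist_eq, dist_eq_norm, Real.coe_toNNReal _ hM0, abs_sub_le_iff]
    constructor
    · exact sfn_lip hne hM0 hM u v
    · have := sfn_lip hne hM0 hM v u
      rwa [norm_sub_rev] at this
  exact h.continuous

end StronglyConvexHelpers

/-- A nonempty closed bounded convex set `C` in a real Hilbert space `H` is strongly convex
with respect to `R > 0` if and only if the function `x* ↦ R‖x*‖ − σ_C(x*)` is convex and
continuous on `H`. -/
theorem stronglyConvexWrt_iff_convex_continuous {H : Type*} [NormedAddCommGroup H]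
    [InnerProductSpace ℝ H] [CompleteSpace H] (C : Set H) (hne : C.Nonempty)
    (hcl : IsClosed C) (hbd : Bornology.IsBounded C) (hconv : Convex ℝ C)
    (R : ℝ) (hR : 0 < R) :
    StronglyConvexWrt R C ↔
      (ConvexOn ℝ Set.univ (fun xs => R * ‖xs‖ - supportFn C xs) ∧
        Continuous (fun xs => R * ‖xs‖ - supportFn C xs)) := by
  obtain ⟨M, hM⟩ := isBounded_iff_forall_norm_le.1 hbd
  have hM0 : 0 ≤ M := le_trans (norm_nonneg _) (hM _ hne.choose_spec)
  constructor
  · rintro ⟨S, hS⟩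
    have hmid : ∀ x ∈ C, ∀ y ∈ C, ∀ t : ℝ, 0 ≤ t → t ≤ 1 → ∀ z : H, ‖z‖ ≤ 1 →
        t • x + (1 - t) • y + (t * (1 - t) * ‖x - y‖ ^ 2 / (2 * R)) • z ∈ C := by
      intro x hx y hy t ht0 ht1 z hz
      rw [hS] at hx hy ⊢
      rw [Set.mem_iInter₂] at hx hy ⊢
      intro c hc
      rw [Metric.mem_closedBall, dist_eq_norm]
      have hxc : ‖x - c‖ ≤ R := by
        have := hx c hc; rwa [Metric.mem_closedBall, dist_eq_norm] at this
      have hyc : ‖y - c‖ ≤ R := by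
        have := hy c hc; rwa [Metric.mem_closedBall, dist_eq_norm] at this
      exact ball_combo hR hxc hyc ht0 ht1 hz
    constructor
    · refine ⟨convex_univ, ?_⟩
      intro x _ y _ a b ha hb hab
      have key := key_ineq hne hM hR hmid (a • x) (b • y)
      rw [sfn_smul hne hM ha x, sfn_smul hne hM hb y] at key
      have n1 : ‖a • x‖ = a * ‖x‖ := by
        rw [norm_smul, Real.norm_eq_abs, abs_of_nonneg ha]
      have n2 : ‖b • y‖ = b * ‖y‖ := by
        rw [norm_smul, Real.norm_eq_abs, abs_of_nonneg hb]
      rw [n1, n2] at key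
      simp only [smul_eq_mul]
      nlinarith [key]
    · exact (continuous_const.mul continuous_norm).sub (sfn_cont hne hM0 hM)
  · rintro ⟨hcy, -⟩
    exact backward_dir hne hcl hbd hconv hR hcy
end

section
/- For R > 0, the mapping C ↦ C^{ρ_R} is an involution of the family of subsets of E that are strongly convex with respect to R: if C is strongly convex with respect to R, then C^{ρ_R} is strongly convex with respect to R and (C^{ρ_R})^{ρ_R} = C. -/
/-- The `ρ_R`-polar of a set `C`: the set of points at distance at most `R` from every
point of `C`, i.e. `⋂_{x ∈ C} B(x, R)`. -/
def rhoPolar {E : Type*} [NormedAddCommGroup E] (R : ℝ) (C : Set E) : Set E :=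
  {y | ∀ x ∈ C, ‖x - y‖ ≤ R}

/-- The mapping `C ↦ C^{ρ_R}` is an involution of the family of subsets of `E` that are
strongly convex with respect to `R`: if `C` is strongly convex with respect to `R`, then
`C^{ρ_R}` is strongly convex with respect to `R` and `(C^{ρ_R})^{ρ_R} = C`. -/
theorem rhoPolar_involution {E : Type*} [NormedAddCommGroup E] [NormedSpace ℝ E]
    (R : ℝ) (hR : 0 < R) (C : Set E) (hC : StronglyConvexWrt R C) :
    StronglyConvexWrt R (rhoPolar R C) ∧ rhoPolar R (rhoPolar R C) = C := by
  obtain ⟨S, hS⟩ := hC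
  constructor
  · refine ⟨C, ?_⟩
    ext y
    simp only [rhoPolar, Set.mem_setOf_eq, Set.mem_iInter, Metric.mem_closedBall,
      dist_eq_norm]
    constructor
    · intro h x hx; rw [norm_sub_rev]; exact h x hx
    · intro h x hx; rw [norm_sub_rev]; exact h x hx
  · apply Set.Subset.antisymm
    · intro y hy
      rw [hS]
      simp only [Set.mem_iInter, Metric.mem_closedBall, dist_eq_norm]
      intro c hc
      rw [norm_sub_rev]
      apply hy
      intro x hx
      have := hS ▸ hx
      simp only [Set.mem_iInter, Metric.mem_closedBall, dist_eq_norm] at this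
      exact this c hc
    · intro x hx y hy
      rw [norm_sub_rev]
      exact hy x hx
end

section
/- If C ⊆ ℝⁿ is nonempty and strongly convex with respect to R > 0, then F_C(x) ≤ d_{C^{ρ_R}}(x) + R for every x ∈ ℝⁿ. -/
noncomputable section

open Classical

open scoped RealInnerProductSpace

/-- `N` is a norm on `ℝⁿ` (here `ℝⁿ` is `EuclideanSpace ℝ (Fin n)`, carrying the Euclidean
scalar product `⟪·, ·⟫`). -/
structure IsNorm {n : ℕ} (N : EuclideanSpace ℝ (Fin n) → ℝ) : Prop where
  eq_zero_iff : ∀ x, N x = 0 ↔ x = 0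
  smul : ∀ (a : ℝ) (x), N (a • x) = |a| * N x
  triangle : ∀ x y, N (x + y) ≤ N x + N y

/-- The closed ball of center `c` and radius `R` with respect to the norm `N`. -/
def ballN {n : ℕ} (N : EuclideanSpace ℝ (Fin n) → ℝ) (c : EuclideanSpace ℝ (Fin n))
    (R : ℝ) : Set (EuclideanSpace ℝ (Fin n)) :=
  {x | N (x - c) ≤ R}

/-- A set `C ⊆ ℝⁿ` is *strongly convex with respect to `R`* (for the norm `N`) if it is an
intersection of a (possibly empty) collection of closed balls with radius `R`. -/
def StronglyConvexN {n : ℕ} (N : EuclideanSpace ℝ (Fin n) → ℝ) (R : ℝ)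
    (C : Set (EuclideanSpace ℝ (Fin n))) : Prop :=
  ∃ S : Set (EuclideanSpace ℝ (Fin n)), C = ⋂ c ∈ S, ballN N c R

/-- The `ρ_R`-polar of `C`: all points within `N`-distance `R` of every point of `C`. -/
def rhoPolarN {n : ℕ} (N : EuclideanSpace ℝ (Fin n) → ℝ) (R : ℝ)
    (C : Set (EuclideanSpace ℝ (Fin n))) : Set (EuclideanSpace ℝ (Fin n)) :=
  {y | ∀ x ∈ C, N (x - y) ≤ R}

/-- The farthest distance function `F_C(x) = max_{c ∈ C} N(x - c)` to a set `C`. -/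
def farthestN {n : ℕ} (N : EuclideanSpace ℝ (Fin n) → ℝ)
    (C : Set (EuclideanSpace ℝ (Fin n))) (x : EuclideanSpace ℝ (Fin n)) : ℝ :=
  sSup ((fun c => N (x - c)) '' C)

/-- The ordinary distance function `d_C(x) = min_{c ∈ C} N(x - c)` to a set `C`. -/
def distN {n : ℕ} (N : EuclideanSpace ℝ (Fin n) → ℝ)
    (C : Set (EuclideanSpace ℝ (Fin n))) (x : EuclideanSpace ℝ (Fin n)) : ℝ :=
  sInf ((fun c => N (x - c)) '' C)

/-- The dual norm `‖x*‖_* = max_{N(x) ≤ 1} ⟪x, x*⟫` of the norm `N`. -/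
def dualNormN {n : ℕ} (N : EuclideanSpace ℝ (Fin n) → ℝ)
    (xs : EuclideanSpace ℝ (Fin n)) : ℝ :=
  sSup ((fun x => ⟪x, xs⟫) '' {x | N x ≤ 1})

/-- The dual unit sphere `S_* = {x* : ‖x*‖_* = 1}`. -/
def dualSphereN {n : ℕ} (N : EuclideanSpace ℝ (Fin n) → ℝ) :
    Set (EuclideanSpace ℝ (Fin n)) :=
  {xs | dualNormN N xs = 1}

/-- The (Fenchel) subdifferential of `f` at `x`, with respect to the Euclidean scalar
product. -/
def subdiff {n : ℕ} (f : EuclideanSpace ℝ (Fin n) → ℝ) (x : EuclideanSpace ℝ (Fin n)) :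
    Set (EuclideanSpace ℝ (Fin n)) :=
  {xs | ∀ y, f x + ⟪y - x, xs⟫ ≤ f y}

/-- The Fenchel conjugate `f*(x*) = sup_x {⟪x, x*⟫ − f(x)}`, with values in `ℝ ∪ {±∞}`. -/
def conjFn {n : ℕ} (f : EuclideanSpace ℝ (Fin n) → ℝ) (xs : EuclideanSpace ℝ (Fin n)) :
    EReal :=
  ⨆ x, ((⟪x, xs⟫ - f x : ℝ) : EReal)

/-- The function `η_f(x*) = ‖x*‖_* · f*(x*/‖x*‖_*)` for `x* ≠ 0`, with `η_f(0) = 0`. -/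
def etaN {n : ℕ} (N : EuclideanSpace ℝ (Fin n) → ℝ) (f : EuclideanSpace ℝ (Fin n) → ℝ)
    (xs : EuclideanSpace ℝ (Fin n)) : EReal :=
  if xs = 0 then 0
  else (dualNormN N xs : EReal) * conjFn f ((dualNormN N xs)⁻¹ • xs)

/-- Condition (b): `η_f` is finite-valued and concave. -/
def EtaFiniteConcave {n : ℕ} (N f : EuclideanSpace ℝ (Fin n) → ℝ) : Prop :=
  ∃ g : EuclideanSpace ℝ (Fin n) → ℝ,
    ConcaveOn ℝ Set.univ g ∧ ∀ xs, etaN N f xs = (g xs : EReal)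

/-- If `C ⊆ ℝⁿ` is nonempty and strongly convex with respect to `R > 0`, then
`F_C(x) ≤ d_{C^{ρ_R}}(x) + R` for every `x ∈ ℝⁿ`. -/
theorem farthest_le_dist_polar_add {n : ℕ} (N : EuclideanSpace ℝ (Fin n) → ℝ)
    (hN : IsNorm N) (R : ℝ) (hR : 0 < R) (C : Set (EuclideanSpace ℝ (Fin n)))
    (hne : C.Nonempty) (hC : StronglyConvexN N R C) :
    ∀ x, farthestN N C x ≤ distN N (rhoPolarN N R C) x + R := by
  obtain ⟨S, hS⟩ := hC
  have hNnn : ∀ z, 0 ≤ N z := by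
    intro z
    have h1 : N (-z) = N z := by simpa using hN.smul (-1) z
    have h0 : N 0 = 0 := (hN.eq_zero_iff 0).2 rfl
    have h2 := hN.triangle z (-z)
    rw [add_neg_cancel, h0, h1] at h2
    linarith
  have hsym : ∀ a b : EuclideanSpace ℝ (Fin n), N (a - b) = N (b - a) := by
    intro a b
    have := hN.smul (-1) (b - a)
    simpa [neg_sub] using this
  intro x
  by_cases hpol : (rhoPolarN N R C).Nonempty
  · obtain ⟨y₀, hy₀⟩ := hpol
    have hdnn : 0 ≤ distN N (rhoPolarN N R C) x := by
      rw [distN]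
      apply Real.sInf_nonneg
      rintro _ ⟨y, _, rfl⟩
      exact hNnn _
    rw [farthestN]
    apply Real.sSup_le
    · rintro _ ⟨c, hc, rfl⟩
      have key : N (x - c) - R ≤ distN N (rhoPolarN N R C) x := by
        rw [distN]
        apply le_csInf
        · exact ⟨N (x - y₀), ⟨y₀, hy₀, rfl⟩⟩
        rintro _ ⟨y, hy, rfl⟩
        have h1 : N (c - y) ≤ R := hy c hc
        have h2 : N (y - c) = N (c - y) := hsym y c
        have h3 : N (x - c) ≤ N (x - y) + N (y - c) := by
          have := hN.triangle (x - y) (y - c)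
          rwa [sub_add_sub_cancel] at this
        linarith
      linarith
    · linarith
  · -- the polar is empty
    have hSempty : S = ∅ := by
      by_contra h
      obtain ⟨c₀, hc₀⟩ := Set.nonempty_iff_ne_empty.2 h
      refine hpol ⟨c₀, fun z hz => ?_⟩
      have : z ∈ ⋂ c ∈ S, ballN N c R := hS ▸ hz
      simpa [ballN] using Set.mem_iInter₂.1 this c₀ hc₀
    have hCuniv : C = Set.univ := by
      rw [hS, hSempty]; simp
    rcases Nat.eq_zero_or_pos n with hn | hn
    · exfalso
      apply hpol
      refine ⟨0, fun z _ => ?_⟩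
      have hsub : Subsingleton (EuclideanSpace ℝ (Fin n)) := by
        subst hn
        infer_instance
      have : z - 0 = 0 := Subsingleton.elim _ _
      rw [this, (hN.eq_zero_iff 0).2 rfl]
      exact hR.le
    · have hpe : rhoPolarN N R C = ∅ := Set.not_nonempty_iff_eq_empty.1 hpol
      have hdist : distN N (rhoPolarN N R C) x = 0 := by
        rw [distN, hpe]
        simp [Real.sInf_empty]
      have hnb : ¬ BddAbove ((fun c => N (x - c)) '' C) := by
        rintro ⟨M, hM⟩
        set v : EuclideanSpace ℝ (Fin n) := EuclideanSpace.single ⟨0, hn⟩ (1 : ℝ) with hv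
        have hvne : v ≠ 0 := by
          intro h
          have : v ⟨0, hn⟩ = (0 : EuclideanSpace ℝ (Fin n)) ⟨0, hn⟩ := by rw [h]
          simp [hv, EuclideanSpace.single_apply] at this
        have hNv : 0 < N v := lt_of_le_of_ne (hNnn v) fun h => hvne ((hN.eq_zero_iff v).1 h.symm)
        set t : ℝ := (|M| + 1) / N v with ht
        have htnn : 0 ≤ t := div_nonneg (by positivity) hNv.le
        have hmem : x - t • v ∈ C := by rw [hCuniv]; trivial
        have : N (x - (x - t • v)) ≤ M := hM ⟨x - t • v, hmem, rfl⟩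
        have heq : N (x - (x - t • v)) = |M| + 1 := by
          have : x - (x - t • v) = t • v := by abel
          rw [this, hN.smul, abs_of_nonneg htnn, ht, div_mul_cancel₀ _ hNv.ne']
        rw [heq] at this
        have := le_abs_self M
        linarith
      rw [farthestN, Real.sSup_of_not_bddAbove hnb, hdist]
      linarith

end
end

section
/- If C ⊆ ℝⁿ is nonempty and strongly convex with respect to R > 0, then the function F_{C^{ρ_R}} − F_C is bounded and ‖F_{C^{ρ_R}} − F_C‖_∞ ≤ R, i.e., |F_{C^{ρ_R}}(x) − F_C(x)| ≤ R for every x ∈ ℝⁿ. -/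
noncomputable section

open Classical

open scoped RealInnerProductSpace

lemma IsNorm.nonneg {n : ℕ} {N : EuclideanSpace ℝ (Fin n) → ℝ} (hN : IsNorm N)
    (x : EuclideanSpace ℝ (Fin n)) : 0 ≤ N x := by
  have h0 : N 0 = 0 := (hN.eq_zero_iff 0).mpr rfl
  have := hN.triangle x (-x)
  have hneg : N (-x) = N x := by
    have := hN.smul (-1) x
    simpa using this
  simp only [add_neg_cancel, h0, hneg] at this
  linarith

lemma IsNorm.symm {n : ℕ} {N : EuclideanSpace ℝ (Fin n) → ℝ} (hN : IsNorm N)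
    (x y : EuclideanSpace ℝ (Fin n)) : N (x - y) = N (y - x) := by
  have := hN.smul (-1) (x - y)
  simpa [neg_sub] using this.symm

lemma IsNorm.tri_sub {n : ℕ} {N : EuclideanSpace ℝ (Fin n) → ℝ} (hN : IsNorm N)
    (x y z : EuclideanSpace ℝ (Fin n)) : N (x - z) ≤ N (x - y) + N (y - z) := by
  have := hN.triangle (x - y) (y - z)
  simpa [sub_add_sub_cancel] using this

/-- If `C ⊆ ℝⁿ` is nonempty and strongly convex with respect to `R > 0`, then the function
`F_{C^{ρ_R}} − F_C` is bounded with uniform norm at most `R`, i.e.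
`|F_{C^{ρ_R}}(x) − F_C(x)| ≤ R` for every `x ∈ ℝⁿ`. -/
theorem abs_farthest_polar_sub_farthest_le {n : ℕ} (N : EuclideanSpace ℝ (Fin n) → ℝ)
    (hN : IsNorm N) (R : ℝ) (hR : 0 < R) (C : Set (EuclideanSpace ℝ (Fin n)))
    (hne : C.Nonempty) (hC : StronglyConvexN N R C) :
    ∀ x, |farthestN N (rhoPolarN N R C) x - farthestN N C x| ≤ R := by
  intro x
  obtain ⟨S, hS⟩ := hC
  set D := rhoPolarN N R C with hD
  rcases S.eq_empty_or_nonempty with hSe | ⟨c₀, hc₀⟩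
  · -- S empty : C = univ
    have hCuniv : C = Set.univ := by simp [hS, hSe]
    by_cases he : ∃ e : EuclideanSpace ℝ (Fin n), e ≠ 0
    · obtain ⟨e, he0⟩ := he
      have hNe : 0 < N e := lt_of_le_of_ne (hN.nonneg e)
        (fun h => he0 ((hN.eq_zero_iff e).mp h.symm))
      -- F_C x = 0 since the image is unbounded
      have hFC : farthestN N C x = 0 := by
        apply Real.sSup_of_not_bddAbove
        rintro ⟨M, hM⟩
        have hmem : (|M| + 1) ∈ (fun c => N (x - c)) '' C := by
          refine ⟨x - ((|M| + 1) / N e) • e, by simp [hCuniv], ?_⟩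
          have : x - (x - ((|M| + 1) / N e) • e) = ((|M| + 1) / N e) • e := by abel
          show N (x - (x - ((|M| + 1) / N e) • e)) = |M| + 1
          rw [this, hN.smul]
          rw [abs_of_nonneg (by positivity)]
          field_simp
        have := hM hmem
        have := le_abs_self M
        linarith
      -- D is empty
      have hDe : D = ∅ := by
        rw [Set.eq_empty_iff_forall_notMem]
        intro y hy
        have := hy (y + ((R + 1) / N e) • e) (by simp [hCuniv])
        have heq : (y + ((R + 1) / N e) • e) - y = ((R + 1) / N e) • e := by abel
        rw [heq, hN.smul, abs_of_nonneg (by positivity)] at this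
        rw [div_mul_cancel₀ _ (ne_of_gt hNe)] at this
        linarith
      have hFD : farthestN N D x = 0 := by
        simp [farthestN, hDe, Real.sSup_empty]
      rw [hFD, hFC]
      simpa using hR.le
    · -- trivial space: every vector is 0
      push_neg at he
      have hx0 : x = 0 := he x
      have hDuniv : D = Set.univ := by
        ext y
        simp only [hD, rhoPolarN, Set.mem_setOf_eq, Set.mem_univ, iff_true]
        intro z _
        have : z - y = 0 := by rw [he z, he y]; simp
        rw [this, (hN.eq_zero_iff 0).mpr rfl]
        exact hR.le
      have himg : ∀ (T : Set (EuclideanSpace ℝ (Fin n))), T.Nonempty →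
          (fun c => N (x - c)) '' T = {0} := by
        intro T hT
        apply Set.eq_singleton_iff_nonempty_unique_mem.mpr
        refine ⟨hT.image _, ?_⟩
        rintro _ ⟨c, _, rfl⟩
        have : x - c = 0 := by rw [he x, he c]; simp
        show N (x - c) = 0
        rw [this, (hN.eq_zero_iff 0).mpr rfl]
      have h1 : farthestN N D x = 0 := by
        rw [farthestN, himg D ⟨0, by rw [hDuniv]; trivial⟩, csSup_singleton]
      have h2 : farthestN N C x = 0 := by
        rw [farthestN, himg C hne, csSup_singleton]
      rw [h1, h2]
      simpa using hR.le
  · -- S nonempty: c₀ ∈ S, hence c₀ ∈ D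
    obtain ⟨p, hp⟩ := hne
    have hCc₀ : ∀ c ∈ C, N (c - c₀) ≤ R := by
      intro c hc
      rw [hS] at hc
      exact Set.mem_iInter₂.mp hc c₀ hc₀
    have hc₀D : c₀ ∈ D := fun z hz => hCc₀ z hz
    have hCD : ∀ c ∈ C, ∀ d ∈ D, N (c - d) ≤ R := fun c hc d hd => hd c hc
    -- boundedness
    have hbC : BddAbove ((fun c => N (x - c)) '' C) := by
      refine ⟨N (x - c₀) + R, ?_⟩
      rintro _ ⟨c, hc, rfl⟩
      have := hN.tri_sub x c₀ c
      have h2 : N (c₀ - c) ≤ R := by rw [hN.symm]; exact hCc₀ c hc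
      linarith
    have hbD : BddAbove ((fun c => N (x - c)) '' D) := by
      refine ⟨N (x - p) + R, ?_⟩
      rintro _ ⟨d, hd, rfl⟩
      have := hN.tri_sub x p d
      have h2 : N (p - d) ≤ R := hCD p hp d hd
      linarith
    have hneC : ((fun c => N (x - c)) '' C).Nonempty := ⟨_, ⟨p, hp, rfl⟩⟩
    have hneD : ((fun c => N (x - c)) '' D).Nonempty := ⟨_, ⟨c₀, hc₀D, rfl⟩⟩
    have hup : farthestN N D x ≤ farthestN N C x + R := by
      apply csSup_le hneD
      rintro _ ⟨d, hd, rfl⟩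
      have h1 := hN.tri_sub x p d
      have h2 : N (p - d) ≤ R := hCD p hp d hd
      have h3 : N (x - p) ≤ farthestN N C x := le_csSup hbC ⟨p, hp, rfl⟩
      linarith
    have hdown : farthestN N C x ≤ farthestN N D x + R := by
      apply csSup_le hneC
      rintro _ ⟨c, hc, rfl⟩
      have h1 := hN.tri_sub x c₀ c
      have h2 : N (c₀ - c) ≤ R := by rw [hN.symm]; exact hCc₀ c hc
      have h3 : N (x - c₀) ≤ farthestN N D x := le_csSup hbD ⟨c₀, hc₀D, rfl⟩
      linarith
    rw [abs_le]
    constructor <;> linarith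

end
end
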